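/- arXiv:2008.08938 — 4 statements merged into one kernel-verified Lean document; each statement's English description precedes it below -/
import Mathlib

section
/- The monomial ideal L(λ) equals the intersection, over all integers i with 1 ≤ i ≤ m and a_i ≠ 0, of the irreducible monomial ideals ⟨x_0^{a_m+1}, x_1^{a_{m−1}+1}, …, x_{m−i−1}^{a_{i+1}+1}, x_{m−i}^{a_i}⟩ (the ideal generated by x_l^{a_{m−l}+1} for 0 ≤ l ≤ m−i−1 together with x_{m−i}^{a_i}). -/
open MvPolynomial
open Fin.NatCast

noncomputable section

/-- `a_j`: the number of parts of the partition `l 1 ≥ l 2 ≥ ⋯ ≥ l r` equal to `j`. -/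
def partCount (r : ℕ) (l : ℕ → ℕ) (j : ℕ) : ℕ :=
  ((Finset.Icc 1 r).filter fun i => l i = j).card

/-- The generators of the lexicographic ideal `L(λ)`: the monomials
`x_0^{a_m} x_1^{a_{m−1}} ⋯ x_{kk−1}^{a_{m−kk+1}} · x_kk^{a_{m−kk}+1}` for `0 ≤ kk ≤ m−2`,
together with `x_0^{a_m} x_1^{a_{m−1}} ⋯ x_{m−2}^{a_2} x_{m−1}^{a_1}`. -/
def lexGens (k : Type*) [Field k] (m r : ℕ) (l : ℕ → ℕ) :
    Set (MvPolynomial (Fin (m + 1)) k) :=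
  { f | ∃ kk : ℕ, kk + 2 ≤ m ∧
      f = (∏ t ∈ Finset.range kk, X ((t : ℕ) : Fin (m + 1)) ^ partCount r l (m - t)) *
            X ((kk : ℕ) : Fin (m + 1)) ^ (partCount r l (m - kk) + 1) }
  ∪ { (∏ t ∈ Finset.range (m - 1), X ((t : ℕ) : Fin (m + 1)) ^ partCount r l (m - t)) *
        X (((m - 1 : ℕ)) : Fin (m + 1)) ^ partCount r l 1 }

/-- The lexicographic ideal `L(λ)` associated to the partition `λ`. -/
def lexIdeal (k : Type*) [Field k] (m r : ℕ) (l : ℕ → ℕ) :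
    Ideal (MvPolynomial (Fin (m + 1)) k) :=
  Ideal.span (lexGens k m r l)

/-! Both sides are spanned by monomials, so it suffices to compare which exponent vectors `c` they
contain. With `e_t = a_{m-t}`, the monomial `x^c` lies in `L(λ)` iff either `c ≥ e` on `[0, j)` and
`c_j > e_j` for some `j < m - 1`, or `c ≥ e` on `[0, m)`; it lies in the component with
`i = m - j` iff `c_t > e_t` for some `t < j` or `c_j ≥ e_j`. If `c ≥ e` fails, the first position
`j` where `c_j < e_j` has `e_j ≠ 0`, and its component supplies a `t < j` with `c_t > e_t`. -/

theorem Finsupp.sum_single_le_iff {ι σ M : Type*} [AddCommMonoid M] [PartialOrder M]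
    [CanonicallyOrderedAdd M] {s : Finset ι} {f : ι → σ} (hf : Set.InjOn f s) (e : ι → M)
    (c : σ →₀ M) : ∑ t ∈ s, Finsupp.single (f t) (e t) ≤ c ↔ ∀ t ∈ s, e t ≤ c (f t) := by
  classical
  have hval : ∀ t ∈ s, (∑ u ∈ s, Finsupp.single (f u) (e u)) (f t) = e t := by
    intro t ht
    rw [Finsupp.finsetSum_apply, Finset.sum_eq_single t
      (fun u hu hut => Finsupp.single_eq_of_ne' fun h => hut (hf hu ht h))
      (fun h => absurd ht h), Finsupp.single_eq_same]
  refine ⟨fun h t ht => hval t ht ▸ h (f t), fun h x => ?_⟩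
  by_cases hx : ∃ t ∈ s, f t = x
  · obtain ⟨t, ht, rfl⟩ := hx
    exact hval t ht ▸ h t ht
  · push Not at hx
    rw [Finsupp.finsetSum_apply, Finset.sum_eq_zero fun u hu => Finsupp.single_eq_of_ne' (hx u hu)]
    exact zero_le

theorem MvPolynomial.span_monomial_image_eq_biInf {σ R ι : Type*} [CommSemiring R]
    {S : Set (σ →₀ ℕ)} {P : ι → Prop} {T : ι → Set (σ →₀ ℕ)}
    (h : ∀ c, (∃ s ∈ S, s ≤ c) ↔ ∀ i, P i → ∃ s ∈ T i, s ≤ c) :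
    Ideal.span ((fun s => monomial s (1 : R)) '' S) =
      ⨅ i, ⨅ (_ : P i), Ideal.span ((fun s => monomial s (1 : R)) '' T i) := by
  ext p
  simp only [Ideal.mem_iInf, mem_ideal_span_monomial_image, h]
  exact ⟨fun hp i hi c hc => hp c hc i hi, fun hp c hc i hi => hp i hi c hc⟩

theorem Fin.natCast_injOn_Iio (n : ℕ) [NeZero n] : Set.InjOn (Nat.cast : ℕ → Fin n) (Set.Iio n) :=
  fun a ha b hb hab => by
    simpa [Fin.val_cast_of_lt ha, Fin.val_cast_of_lt hb] using congrArg Fin.val hab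

theorem exists_prefix_le_lt_or_forall_le_iff (n : ℕ) (e c : ℕ → ℕ) :
    ((∃ j, j + 1 < n ∧ (∀ t < j, e t ≤ c t) ∧ e j < c j) ∨ ∀ t < n, e t ≤ c t) ↔
      ∀ j < n, e j ≠ 0 → (∃ t < j, e t < c t) ∨ e j ≤ c j := by
  constructor
  · rintro (⟨j, hjn, hle, hlt⟩ | hle) i hi _
    · rcases lt_or_ge j i with hji | hij
      · exact Or.inl ⟨j, hji, hlt⟩
      · exact Or.inr (hij.eq_or_lt.elim (fun h => h ▸ hlt.le) (hle i))
    · exact Or.inr (hle i hi)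
  · intro h
    by_cases hle : ∀ t < n, e t ≤ c t
    · exact Or.inr hle
    classical
    push Not at hle
    let j := Nat.find hle
    obtain ⟨hjn, hj⟩ : j < n ∧ c j < e j := Nat.find_spec hle
    have hbefore : ∀ t < j, e t ≤ c t := fun t ht =>
      not_lt.mp fun hlt => Nat.find_min hle ht ⟨ht.trans hjn, hlt⟩
    rcases h j hjn (by omega) with ⟨t, htj, hlt⟩ | hge
    · exact Or.inl ⟨t, by omega, fun u hu => hbefore u (hu.trans htj), hlt⟩
    · omega

section Exponents

open Finset

variable {R : Type*} [CommSemiring R]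

def stairExponent (m : ℕ) (e : ℕ → ℕ) (j d : ℕ) : Fin (m + 1) →₀ ℕ :=
  ∑ t ∈ range (j + 1), Finsupp.single (t : Fin (m + 1)) (Function.update e j d t)

theorem prod_X_pow_mul_X_pow_eq_monomial (m : ℕ) (e : ℕ → ℕ) (j d : ℕ) :
    (∏ t ∈ range j, X (t : Fin (m + 1)) ^ e t) * X (j : Fin (m + 1)) ^ d =
      monomial (stairExponent m e j d) (1 : R) := by
  rw [stairExponent, monomial_sum_one, prod_range_succ, Function.update_self, X_pow_eq_monomial]
  congr 1
  refine prod_congr rfl fun t ht => ?_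
  rw [Function.update_of_ne (mem_range.mp ht).ne, X_pow_eq_monomial]

theorem stairExponent_le_iff {m j : ℕ} (hj : j ≤ m) (e : ℕ → ℕ) (d : ℕ)
    (c : Fin (m + 1) →₀ ℕ) :
    stairExponent m e j d ≤ c ↔ (∀ t < j, e t ≤ c t) ∧ d ≤ c j := by
  have hinj : Set.InjOn (Nat.cast : ℕ → Fin (m + 1)) (range (j + 1)) :=
    (Fin.natCast_injOn_Iio (m + 1)).mono (by simp [hj])
  rw [stairExponent, Finsupp.sum_single_le_iff hinj]
  simp only [mem_range, Nat.lt_succ_iff_lt_or_eq, or_imp, forall_and, forall_eq,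
    Function.update_self]
  refine and_congr_left' (forall₂_congr fun t ht => ?_)
  rw [Function.update_of_ne ht.ne]

def lexExponents (m : ℕ) (a : ℕ → ℕ) : Set (Fin (m + 1) →₀ ℕ) :=
  { s | ∃ j, j + 2 ≤ m ∧ s = stairExponent m (fun t => a (m - t)) j (a (m - j) + 1) } ∪
    { stairExponent m (fun t => a (m - t)) (m - 1) (a 1) }

theorem lexGens_eq_image (k : Type*) [Field k] (m r : ℕ) (l : ℕ → ℕ) :
    lexGens k m r l = (fun s => monomial s (1 : k)) '' lexExponents m (partCount r l) := by
  ext f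
  simp only [lexGens, lexExponents, prod_X_pow_mul_X_pow_eq_monomial, Set.image_union,
    Set.image_singleton, Set.mem_union, Set.mem_ofPred_eq, Set.mem_image]
  aesop

theorem exists_mem_lexExponents_le_iff {m : ℕ} (hm : 1 ≤ m) (a : ℕ → ℕ) (c : Fin (m + 1) →₀ ℕ) :
    (∃ s ∈ lexExponents m a, s ≤ c) ↔
      (∃ j, j + 1 < m ∧ (∀ t < j, a (m - t) ≤ c t) ∧ a (m - j) < c j) ∨
        ∀ t < m, a (m - t) ≤ c t := by
  simp only [lexExponents, Set.mem_union, Set.mem_ofPred_eq, Set.mem_singleton_iff, or_and_right,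
    exists_or, exists_eq_left]
  refine or_congr ⟨?_, ?_⟩ ?_
  · rintro ⟨_, ⟨j, hj, rfl⟩, hle⟩
    exact ⟨j, by omega, (stairExponent_le_iff (by omega) _ _ _).mp hle⟩
  · rintro ⟨j, hj, hle, hlt⟩
    exact ⟨_, ⟨j, by omega, rfl⟩, (stairExponent_le_iff (by omega) _ _ _).mpr ⟨hle, hlt⟩⟩
  · obtain ⟨n, rfl⟩ := Nat.exists_eq_add_of_le' hm
    rw [stairExponent_le_iff (Nat.sub_le _ 1), Nat.forall_lt_succ_right, Nat.add_sub_cancel,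
      Nat.add_sub_cancel_left]

def componentExponents (m : ℕ) (a : ℕ → ℕ) (i : ℕ) : Set (Fin (m + 1) →₀ ℕ) :=
  { s | ∃ t, t + i + 1 ≤ m ∧ s = Finsupp.single (t : Fin (m + 1)) (a (m - t) + 1) } ∪
    { Finsupp.single ((m - i : ℕ) : Fin (m + 1)) (a i) }

theorem componentGens_eq_image (k : Type*) [Field k] (m : ℕ) (a : ℕ → ℕ) (i : ℕ) :
    ({ f | ∃ t : ℕ, t + i + 1 ≤ m ∧ f = X (t : Fin (m + 1)) ^ (a (m - t) + 1) } ∪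
        { X ((m - i : ℕ) : Fin (m + 1)) ^ a i } : Set (MvPolynomial (Fin (m + 1)) k)) =
      (fun s => monomial s (1 : k)) '' componentExponents m a i := by
  ext f
  simp only [componentExponents, X_pow_eq_monomial, Set.image_union,
    Set.image_singleton, Set.mem_union, Set.mem_ofPred_eq, Set.mem_image]
  aesop

theorem exists_mem_componentExponents_le_iff (m : ℕ) (a : ℕ → ℕ) (i : ℕ)
    (c : Fin (m + 1) →₀ ℕ) :
    (∃ s ∈ componentExponents m a i, s ≤ c) ↔
      (∃ t < m - i, a (m - t) < c t) ∨ a i ≤ c ((m - i : ℕ) : Fin (m + 1)) := by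
  simp only [componentExponents, Set.mem_union, Set.mem_ofPred_eq, Set.mem_singleton_iff,
    or_and_right, exists_or, exists_eq_left, Finsupp.single_le_iff]
  refine or_congr_left ⟨?_, ?_⟩
  · rintro ⟨_, ⟨t, ht, rfl⟩, hle⟩
    exact ⟨t, by omega, Finsupp.single_le_iff.mp hle⟩
  · rintro ⟨t, ht, hlt⟩
    exact ⟨_, ⟨t, by omega, rfl⟩, Finsupp.single_le_iff.mpr hlt⟩

end Exponents

theorem lexIdeal_eq_iInf_irreducible_general (k : Type*) [Field k] (m r : ℕ)
    (hm : 1 ≤ m) (l : ℕ → ℕ) :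
    lexIdeal k m r l =
      ⨅ i ∈ (Finset.Icc 1 m).filter (fun i => partCount r l i ≠ 0),
        Ideal.span
          ({ f | ∃ t : ℕ, t + i + 1 ≤ m ∧
              f = X ((t : ℕ) : Fin (m + 1)) ^ (partCount r l (m - t) + 1) }
            ∪ { X (((m - i : ℕ)) : Fin (m + 1)) ^ partCount r l i }) := by
  simp only [lexIdeal, lexGens_eq_image, componentGens_eq_image]
  refine span_monomial_image_eq_biInf fun c => ?_
  rw [exists_mem_lexExponents_le_iff hm, exists_prefix_le_lt_or_forall_le_iff]
  simp only [Finset.mem_filter, Finset.mem_Icc, exists_mem_componentExponents_le_iff]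
  constructor
  · rintro h i ⟨⟨hi, him⟩, hai⟩
    obtain ⟨j, hj, rfl⟩ : ∃ j < m, i = m - j := ⟨m - i, by omega, by omega⟩
    rw [Nat.sub_sub_self hj.le]
    exact h j hj hai
  · intro h j hj haj
    have := h (m - j) ⟨⟨by omega, by omega⟩, haj⟩
    rwa [Nat.sub_sub_self hj.le] at this

/-- The monomial ideal `L(λ)` equals the intersection, over all integers `i`
with `1 ≤ i ≤ m` and `a_i ≠ 0`, of the irreducible monomial ideals
`⟨x_0^{a_m+1}, x_1^{a_{m−1}+1}, …, x_{m−i−1}^{a_{i+1}+1}, x_{m−i}^{a_i}⟩`. -/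
theorem lexIdeal_eq_iInf_irreducible (k : Type*) [Field k] (m r : ℕ)
    (hm : 1 ≤ m) (hr : 1 ≤ r) (l : ℕ → ℕ)
    (hanti : AntitoneOn l (Set.Icc 1 r)) (hpos : ∀ i ∈ Set.Icc 1 r, 1 ≤ l i)
    (hle : l 1 ≤ m) :
    lexIdeal k m r l =
      ⨅ i ∈ (Finset.Icc 1 m).filter (fun i => partCount r l i ≠ 0),
        Ideal.span
          ({ f | ∃ t : ℕ, t + i + 1 ≤ m ∧
              f = X ((t : ℕ) : Fin (m + 1)) ^ (partCount r l (m - t) + 1) }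
            ∪ { X (((m - i : ℕ)) : Fin (m + 1)) ^ partCount r l i }) :=
  lexIdeal_eq_iInf_irreducible_general k m r hm l

end
end

section
/- The ideal sum L(λ) + J equals the ideal ⟨x_0, x_1, …, x_{m−1}⟩ generated by the first m variables of R. -/
open MvPolynomial
open Fin.NatCast

noncomputable section

/-- The monomial ideal `J = ⟨x_0, …, x_{m−λ₁−2}, x_{m−λ₁−1}², x_{m−λ₁}, …, x_{m−1}⟩`:
generated by all variables `x_i` with `0 ≤ i ≤ m−1` except `x_{m−λ₁−1}`, together with
`x_{m−λ₁−1}²`. -/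
def Jideal (k : Type*) [Field k] (m l1 : ℕ) : Ideal (MvPolynomial (Fin (m + 1)) k) :=
  Ideal.span
    ({ f | ∃ i : ℕ, i < m ∧ i ≠ m - l1 - 1 ∧ f = X ((i : ℕ) : Fin (m + 1)) }
      ∪ { (X (((m - l1 - 1 : ℕ)) : Fin (m + 1))) ^ 2 })

/-! Every generator of `L(λ)` and of `J` is divisible by some `x_i` with `i < m`; for the last
generator of `L(λ)` this is `x_{m−λ₁}`, whose exponent `a_{λ₁}` is positive. Conversely `J`
contains every `x_i` except `x_{m−λ₁−1}`, and the generator of `L(λ)` with `k = m−λ₁−1` is exactly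
`x_{m−λ₁−1}`, since `a_j = 0` for `j > λ₁`. -/

theorem partCount_eq_zero_of_lt {r : ℕ} {l : ℕ → ℕ} (hanti : AntitoneOn l (Set.Icc 1 r))
    {j : ℕ} (hj : l 1 < j) : partCount r l j = 0 := by
  rw [partCount, Finset.card_eq_zero, Finset.filter_eq_empty_iff]
  intro i hi
  rw [Finset.mem_Icc] at hi
  have : l i ≤ l 1 := hanti ⟨le_rfl, hi.1.trans hi.2⟩ hi hi.1
  omega

theorem partCount_pos {r : ℕ} {l : ℕ → ℕ} {i : ℕ} (hi : i ∈ Set.Icc 1 r) :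
    0 < partCount r l (l i) :=
  Finset.card_pos.2 ⟨i, Finset.mem_filter.2 ⟨Finset.mem_Icc.2 hi, rfl⟩⟩

section

variable {k : Type*} [Field k]

theorem mem_span_X_of_X_dvd {m i : ℕ} {f : MvPolynomial (Fin (m + 1)) k} (hi : i < m)
    (h : X ((i : ℕ) : Fin (m + 1)) ∣ f) :
    f ∈ Ideal.span { f | ∃ i : ℕ, i < m ∧ f = X ((i : ℕ) : Fin (m + 1)) } :=
  Ideal.mem_of_dvd _ h (Ideal.subset_span ⟨i, hi, rfl⟩)

theorem Jideal_le_span_X {m l1 : ℕ} (hlt : l1 < m) :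
    Jideal k m l1 ≤ Ideal.span { f | ∃ i : ℕ, i < m ∧ f = X ((i : ℕ) : Fin (m + 1)) } := by
  rw [Jideal, Ideal.span_le]
  rintro f (⟨i, hi, -, rfl⟩ | rfl)
  · exact Ideal.subset_span ⟨i, hi, rfl⟩
  · exact mem_span_X_of_X_dvd (by omega) (dvd_pow_self _ two_ne_zero)

theorem lexIdeal_le_span_X {m r : ℕ} {l : ℕ → ℕ} (hr : 1 ≤ r) (hl1 : 1 ≤ l 1) (hlt : l 1 < m) :
    lexIdeal k m r l ≤ Ideal.span { f | ∃ i : ℕ, i < m ∧ f = X ((i : ℕ) : Fin (m + 1)) } := by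
  rw [lexIdeal, Ideal.span_le]
  rintro f (⟨kk, hkk, rfl⟩ | rfl)
  · exact mem_span_X_of_X_dvd (by omega) ((dvd_pow_self _ (Nat.succ_ne_zero _)).mul_left _)
  · have hlast : (∏ t ∈ Finset.range (m - 1),
          X ((t : ℕ) : Fin (m + 1)) ^ partCount r l (m - t)) *
          X (((m - 1 : ℕ)) : Fin (m + 1)) ^ partCount r l 1 =
        ∏ t ∈ Finset.range m, (X ((t : ℕ) : Fin (m + 1)) : MvPolynomial (Fin (m + 1)) k) ^
          partCount r l (m - t) := by
      obtain ⟨n, rfl⟩ : ∃ n, m = n + 1 := ⟨m - 1, by omega⟩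
      rw [Finset.prod_range_succ, Nat.add_sub_cancel, Nat.add_sub_cancel_left]
    have hexp : partCount r l (m - (m - l 1)) ≠ 0 := by
      rw [Nat.sub_sub_self hlt.le]
      exact (partCount_pos ⟨le_rfl, hr⟩).ne'
    rw [hlast]
    exact mem_span_X_of_X_dvd (i := m - l 1) (by omega)
      ((dvd_pow_self _ hexp).trans (Finset.dvd_prod_of_mem _ (Finset.mem_range.2 (by omega))))

theorem X_mem_lexIdeal {m r : ℕ} {l : ℕ → ℕ} (hanti : AntitoneOn l (Set.Icc 1 r))
    (hl1 : 1 ≤ l 1) (hlt : l 1 < m) :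
    X (((m - l 1 - 1 : ℕ)) : Fin (m + 1)) ∈ lexIdeal k m r l := by
  refine Ideal.subset_span (Or.inl ⟨m - l 1 - 1, by omega, ?_⟩)
  have hprod : ∏ t ∈ Finset.range (m - l 1 - 1),
      (X ((t : ℕ) : Fin (m + 1)) : MvPolynomial (Fin (m + 1)) k) ^ partCount r l (m - t) = 1 :=
    Finset.prod_eq_one fun t ht => by
      rw [partCount_eq_zero_of_lt hanti (by rw [Finset.mem_range] at ht; omega), pow_zero]
  rw [hprod, partCount_eq_zero_of_lt hanti (by omega), one_mul, zero_add, pow_one]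

end

/-- The ideal sum `L(λ) + J` equals `⟨x_0, x_1, …, x_{m−1}⟩`. -/
theorem lexIdeal_add_Jideal (k : Type*) [Field k] (m r : ℕ)
    (hr : 1 ≤ r) (l : ℕ → ℕ)
    (hanti : AntitoneOn l (Set.Icc 1 r)) (hpos : ∀ i ∈ Set.Icc 1 r, 1 ≤ l i)
    (hlt : l 1 < m) :
    lexIdeal k m r l + Jideal k m (l 1) =
      Ideal.span { f | ∃ i : ℕ, i < m ∧ f = X ((i : ℕ) : Fin (m + 1)) } := by
  have hl1 : 1 ≤ l 1 := hpos 1 ⟨le_rfl, hr⟩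
  refine le_antisymm (sup_le (lexIdeal_le_span_X hr hl1 hlt) (Jideal_le_span_X hlt)) ?_
  rw [Ideal.span_le]
  rintro _ ⟨i, hi, rfl⟩
  by_cases h : i = m - l 1 - 1
  · subst h
    exact Ideal.mem_sup_left (X_mem_lexIdeal hanti hl1 hlt)
  · exact Ideal.mem_sup_right (Ideal.subset_span (Or.inl ⟨i, hi, h, rfl⟩))

end
end

section
/- Let K := L(λ) ∩ J. The saturation of K with respect to x_{m−1} equals the saturation of L(λ) with respect to x_{m−1}; that is, {g ∈ R : x_{m−1}^t · g ∈ K for some integer t ≥ 0} = {g ∈ R : x_{m−1}^t · g ∈ L(λ) for some integer t ≥ 0}. -/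
open MvPolynomial
open Fin.NatCast

noncomputable section

-- One more factor `x ∈ J` pushes `x ^ t * g ∈ I` into `J` as well.
theorem saturation_inf_of_mem_right {R : Type*} [CommSemiring R] {I J : Ideal R} {x : R}
    (hx : x ∈ J) :
    { g : R | ∃ t : ℕ, x ^ t * g ∈ I ⊓ J } = { g : R | ∃ t : ℕ, x ^ t * g ∈ I } := by
  ext g
  refine ⟨fun ⟨t, hI, _⟩ => ⟨t, hI⟩, fun ⟨t, hI⟩ => ⟨t + 1, ?_⟩⟩
  rw [pow_succ', mul_assoc]
  exact ⟨I.mul_mem_left x hI, J.mul_mem_right _ hx⟩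

theorem X_pred_mem_Jideal (k : Type*) [Field k] {m l1 : ℕ} (hl1 : 1 ≤ l1) (hlt : l1 < m) :
    X (((m - 1 : ℕ)) : Fin (m + 1)) ∈ Jideal k m l1 :=
  Ideal.subset_span (Or.inl ⟨m - 1, by omega, by omega, rfl⟩)

theorem saturation_lexIdeal_inf_Jideal_general (k : Type*) [Field k] (m r : ℕ)
    (hr : 1 ≤ r) (l : ℕ → ℕ)
    (hpos : ∀ i ∈ Set.Icc 1 r, 1 ≤ l i)
    (hlt : l 1 < m) :
    { g : MvPolynomial (Fin (m + 1)) k | ∃ t : ℕ,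
        X (((m - 1 : ℕ)) : Fin (m + 1)) ^ t * g ∈ lexIdeal k m r l ⊓ Jideal k m (l 1) } =
    { g : MvPolynomial (Fin (m + 1)) k | ∃ t : ℕ,
        X (((m - 1 : ℕ)) : Fin (m + 1)) ^ t * g ∈ lexIdeal k m r l } := by
  exact saturation_inf_of_mem_right
    (X_pred_mem_Jideal k (hpos 1 ⟨le_rfl, hr⟩) hlt)

/-- For `K := L(λ) ∩ J`, the saturation of `K` with respect to `x_{m−1}`
equals the saturation of `L(λ)` with respect to `x_{m−1}`. -/
theorem saturation_lexIdeal_inf_Jideal (k : Type*) [Field k] (m r : ℕ)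
    (hr : 1 ≤ r) (l : ℕ → ℕ)
    (hanti : AntitoneOn l (Set.Icc 1 r)) (hpos : ∀ i ∈ Set.Icc 1 r, 1 ≤ l i)
    (hlt : l 1 < m) :
    { g : MvPolynomial (Fin (m + 1)) k | ∃ t : ℕ,
        X (((m - 1 : ℕ)) : Fin (m + 1)) ^ t * g ∈ lexIdeal k m r l ⊓ Jideal k m (l 1) } =
    { g : MvPolynomial (Fin (m + 1)) k | ∃ t : ℕ,
        X (((m - 1 : ℕ)) : Fin (m + 1)) ^ t * g ∈ lexIdeal k m r l } :=
  saturation_lexIdeal_inf_Jideal_general k m r hr l hpos hlt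

end
end

section
/- The ideal x_0·⟨x_0, x_1, …, x_{m−1}⟩ + x_1^{r−s−1}·⟨x_1, x_2, …, x_{n−1}, x_n^{s+1}⟩ equals the intersection L(λ) ∩ ⟨x_0^2, x_1, x_2, …, x_{m−1}⟩. -/
open MvPolynomial
open Fin.NatCast

noncomputable section

def psiMap (k : Type*) [Field k] (m : ℕ) :
    MvPolynomial (Fin (m + 1)) k →ₐ[k] MvPolynomial (Fin (m + 1)) k :=
  aeval (fun j : Fin (m + 1) => if 1 ≤ (j : ℕ) ∧ (j : ℕ) < m then 0 else X j)

lemma psiMap_X (k : Type*) [Field k] (m : ℕ) (j : Fin (m + 1)) :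
    psiMap k m (X j) = if 1 ≤ (j : ℕ) ∧ (j : ℕ) < m then 0 else X j :=
  aeval_X _ j

lemma psiMap_sub_mem (k : Type*) [Field k] (m : ℕ) (h : MvPolynomial (Fin (m + 1)) k) :
    h - psiMap k m h ∈
      Ideal.span { f | ∃ i : ℕ, 1 ≤ i ∧ i < m ∧ f = X ((i : ℕ) : Fin (m + 1)) } := by
  induction h using MvPolynomial.induction_on with
  | C a =>
      rw [show psiMap k m (C a) = C a by simp [psiMap, MvPolynomial.algebraMap_eq], sub_self]
      exact Ideal.zero_mem _
  | add p q hp hq =>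
      rw [map_add, show p + q - (psiMap k m p + psiMap k m q)
        = (p - psiMap k m p) + (q - psiMap k m q) by ring]
      exact Ideal.add_mem _ hp hq
  | mul_X p i hp =>
      rw [map_mul, psiMap_X]
      by_cases hi : 1 ≤ (i : ℕ) ∧ (i : ℕ) < m
      · rw [if_pos hi, mul_zero, sub_zero]
        exact Ideal.mul_mem_left _ p
          (Ideal.subset_span ⟨(i : ℕ), hi.1, hi.2, by rw [Fin.cast_val_eq_self]⟩)
      · rw [if_neg hi, show p * X i - psiMap k m p * X i = (p - psiMap k m p) * X i by ring]
        exact Ideal.mul_mem_right _ _ hp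

lemma cancel_aux (k : Type*) [Field k] (m : ℕ) (hm : 0 < m) (g : MvPolynomial (Fin (m + 1)) k)
    (hg : X 0 * g ∈ Ideal.span ({ X (0 : Fin (m + 1)) ^ 2 }
      ∪ { f | ∃ i : ℕ, 1 ≤ i ∧ i < m ∧ f = X ((i : ℕ) : Fin (m + 1)) })) :
    g ∈ Ideal.span { f | ∃ i : ℕ, i < m ∧ f = X ((i : ℕ) : Fin (m + 1)) } := by
  have h2 : psiMap k m (X 0 * g) ∈
      Ideal.span {(X (0 : Fin (m + 1)) : MvPolynomial (Fin (m + 1)) k) ^ 2} := by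
    have hmap := Ideal.mem_map_of_mem (psiMap k m) hg
    rw [Ideal.map_span] at hmap
    refine Ideal.span_le.mpr ?_ hmap
    rintro _ ⟨x, hx, rfl⟩
    rcases hx with hx | ⟨i, hi1, hi2, rfl⟩
    · rw [Set.mem_singleton_iff] at hx
      subst hx
      rw [map_pow, psiMap_X, if_neg (by simp)]
      exact Ideal.subset_span rfl
    · rw [psiMap_X, if_pos ⟨by rwa [Fin.val_cast_of_lt (by omega)],
        by rwa [Fin.val_cast_of_lt (by omega)]⟩]
      exact Ideal.zero_mem _
  rw [map_mul, psiMap_X, if_neg (by simp), Ideal.mem_span_singleton] at h2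
  obtain ⟨q, hq⟩ := h2
  have hcg : psiMap k m g = X 0 * q := by
    rw [pow_two, mul_assoc] at hq
    exact mul_left_cancel₀ (X_ne_zero 0) hq
  have hgdec : g = (g - psiMap k m g) + X 0 * q := by rw [← hcg]; ring
  rw [hgdec]
  refine Ideal.add_mem _ ?_ ?_
  · refine Ideal.span_mono ?_ (psiMap_sub_mem k m g)
    rintro f ⟨i, hi1, hi2, rfl⟩
    exact ⟨i, hi2, rfl⟩
  · exact Ideal.mul_mem_right q _ (Ideal.subset_span ⟨0, hm, by rw [Nat.cast_zero]⟩)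

lemma pc_one (m n r s : ℕ) (hn : 2 ≤ n) (hm : n + 2 ≤ m) (hs : s + 2 ≤ r) :
    partCount r (fun i => if i ≤ r - s - 1 then m - 1 else m - n) (m - 1) = r - s - 1 := by
  unfold partCount
  rw [show ((Finset.Icc 1 r).filter fun i => (if i ≤ r - s - 1 then m - 1 else m - n) = m - 1)
      = Finset.Icc 1 (r - s - 1) by
    ext i
    simp only [Finset.mem_filter, Finset.mem_Icc]
    split_ifs with h <;> omega]
  rw [Nat.card_Icc]
  omega

lemma pc_n (m n r s : ℕ) (hn : 2 ≤ n) (hm : n + 2 ≤ m) (hs : s + 2 ≤ r) :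
    partCount r (fun i => if i ≤ r - s - 1 then m - 1 else m - n) (m - n) = s + 1 := by
  unfold partCount
  rw [show ((Finset.Icc 1 r).filter fun i => (if i ≤ r - s - 1 then m - 1 else m - n) = m - n)
      = Finset.Icc (r - s) r by
    ext i
    simp only [Finset.mem_filter, Finset.mem_Icc]
    split_ifs with h <;> omega]
  rw [Nat.card_Icc]
  omega

lemma pc_zero (m n r s j : ℕ) (hn : 2 ≤ n) (hm : n + 2 ≤ m)
    (h1 : j ≠ m - 1) (h2 : j ≠ m - n) :
    partCount r (fun i => if i ≤ r - s - 1 then m - 1 else m - n) j = 0 := by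
  unfold partCount
  rw [Finset.card_eq_zero, Finset.filter_eq_empty_iff]
  intro i _
  simp only []
  split_ifs with h <;> omega

/-- With `λ = ((m−1)^{r−s−1}, (m−n)^{s+1})`, the ideal
`x_0·⟨x_0, …, x_{m−1}⟩ + x_1^{r−s−1}·⟨x_1, …, x_{n−1}, x_n^{s+1}⟩` equals the
intersection `L(λ) ∩ ⟨x_0², x_1, x_2, …, x_{m−1}⟩`. -/
theorem Kideal_eq_lexIdeal_inf (k : Type*) [Field k] (m n r s : ℕ)
    (hn : 2 ≤ n) (hm : n + 2 ≤ m) (hs : s + 2 ≤ r) :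
    Ideal.span {(X (0 : Fin (m + 1)) : MvPolynomial (Fin (m + 1)) k)} *
        Ideal.span { f | ∃ i : ℕ, i < m ∧ f = X ((i : ℕ) : Fin (m + 1)) } +
      Ideal.span {(X (1 : Fin (m + 1)) : MvPolynomial (Fin (m + 1)) k) ^ (r - s - 1)} *
        Ideal.span ({ f | ∃ i : ℕ, 1 ≤ i ∧ i < n ∧ f = X ((i : ℕ) : Fin (m + 1)) }
          ∪ { X ((n : ℕ) : Fin (m + 1)) ^ (s + 1) }) =
    lexIdeal k m r (fun i => if i ≤ r - s - 1 then m - 1 else m - n) ⊓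
      Ideal.span ({ X (0 : Fin (m + 1)) ^ 2 }
        ∪ { f | ∃ i : ℕ, 1 ≤ i ∧ i < m ∧ f = X ((i : ℕ) : Fin (m + 1)) }) := by
  have hm4 : 4 ≤ m := by omega
  have c0 : ((0 : ℕ) : Fin (m + 1)) = 0 := Nat.cast_zero
  have c1 : ((1 : ℕ) : Fin (m + 1)) = 1 := Nat.cast_one
  set l : ℕ → ℕ := fun i => if i ≤ r - s - 1 then m - 1 else m - n with hldef
  set p : ℕ := r - s - 1 with hpdef
  have hp1 : 1 ≤ p := by omega
  have pc1 : partCount r l (m - 1) = p := pc_one m n r s hn hm hs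
  have pcn : partCount r l (m - n) = s + 1 := pc_n m n r s hn hm hs
  have pc0 : ∀ j, j ≠ m - 1 → j ≠ m - n → partCount r l j = 0 :=
    fun j h1 h2 => pc_zero m n r s j hn hm h1 h2
  have ha : ∀ t, t ≤ m → t ≠ 1 → t ≠ n → partCount r l (m - t) = 0 :=
    fun t h1 h2 h3 => pc0 _ (by omega) (by omega)
  -- product computations
  have hps : ∀ kk, 2 ≤ kk → kk ≤ n →
      (∏ t ∈ Finset.range kk,
        (X ((t : ℕ) : Fin (m + 1)) : MvPolynomial (Fin (m + 1)) k) ^ partCount r l (m - t))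
      = X ((1 : ℕ) : Fin (m + 1)) ^ p := by
    intro kk h2 hkn
    rw [← pc1]
    refine Finset.prod_eq_single_of_mem 1 (Finset.mem_range.mpr (by omega)) ?_
    intro t ht hne
    have htk := Finset.mem_range.mp ht
    rw [ha t (by omega) hne (by omega), pow_zero]
  have hpb : ∀ kk, n < kk → kk ≤ m - 1 →
      (∏ t ∈ Finset.range kk,
        (X ((t : ℕ) : Fin (m + 1)) : MvPolynomial (Fin (m + 1)) k) ^ partCount r l (m - t))
      = X ((1 : ℕ) : Fin (m + 1)) ^ p * X ((n : ℕ) : Fin (m + 1)) ^ (s + 1) := by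
    intro kk h1 h2
    calc (∏ t ∈ Finset.range kk,
            (X ((t : ℕ) : Fin (m + 1)) : MvPolynomial (Fin (m + 1)) k) ^ partCount r l (m - t))
        = ∏ t ∈ ({1, n} : Finset ℕ),
            (X ((t : ℕ) : Fin (m + 1)) : MvPolynomial (Fin (m + 1)) k) ^ partCount r l (m - t) :=
          (Finset.prod_subset ?_ ?_).symm
      _ = X ((1 : ℕ) : Fin (m + 1)) ^ partCount r l (m - 1) *
            X ((n : ℕ) : Fin (m + 1)) ^ partCount r l (m - n) :=
          Finset.prod_pair (show (1 : ℕ) ≠ n by omega)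
      _ = X ((1 : ℕ) : Fin (m + 1)) ^ p * X ((n : ℕ) : Fin (m + 1)) ^ (s + 1) := by
          rw [pc1, pcn]
    · intro x hx
      refine Finset.mem_range.mpr ?_
      rcases Finset.mem_insert.mp hx with h | h
      · omega
      · rw [Finset.mem_singleton] at h; omega
    · intro x hx hnx
      simp only [Finset.mem_insert, Finset.mem_singleton, not_or] at hnx
      have := Finset.mem_range.mp hx
      rw [ha x (by omega) hnx.1 hnx.2, pow_zero]
  -- generator equalities
  have e0 : (∏ t ∈ Finset.range 0,
        (X ((t : ℕ) : Fin (m + 1)) : MvPolynomial (Fin (m + 1)) k) ^ partCount r l (m - t)) *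
      X ((0 : ℕ) : Fin (m + 1)) ^ (partCount r l (m - 0) + 1) = X 0 := by
    simp [pc0 m (by omega) (by omega), c0]
  have e1 : (∏ t ∈ Finset.range 1,
        (X ((t : ℕ) : Fin (m + 1)) : MvPolynomial (Fin (m + 1)) k) ^ partCount r l (m - t)) *
      X ((1 : ℕ) : Fin (m + 1)) ^ (partCount r l (m - 1) + 1) = X 1 ^ (p + 1) := by
    rw [Finset.prod_range_one, pc1, ha 0 (by omega) (by omega) (by omega), pow_zero, one_mul, c1]
  have ei : ∀ kk, 2 ≤ kk → kk < n →
      (∏ t ∈ Finset.range kk,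
        (X ((t : ℕ) : Fin (m + 1)) : MvPolynomial (Fin (m + 1)) k) ^ partCount r l (m - t)) *
      X ((kk : ℕ) : Fin (m + 1)) ^ (partCount r l (m - kk) + 1)
      = X 1 ^ p * X ((kk : ℕ) : Fin (m + 1)) := by
    intro kk h2 hkn
    rw [hps kk h2 (by omega), ha kk (by omega) (by omega) (by omega), zero_add, pow_one, c1]
  have en : (∏ t ∈ Finset.range n,
        (X ((t : ℕ) : Fin (m + 1)) : MvPolynomial (Fin (m + 1)) k) ^ partCount r l (m - t)) *
      X ((n : ℕ) : Fin (m + 1)) ^ (partCount r l (m - n) + 1)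
      = X 1 ^ p * X ((n : ℕ) : Fin (m + 1)) ^ (s + 2) := by
    rw [hps n hn le_rfl, pcn, c1]
  have ebig : ∀ kk, n < kk → kk ≤ m - 2 →
      (∏ t ∈ Finset.range kk,
        (X ((t : ℕ) : Fin (m + 1)) : MvPolynomial (Fin (m + 1)) k) ^ partCount r l (m - t)) *
      X ((kk : ℕ) : Fin (m + 1)) ^ (partCount r l (m - kk) + 1)
      = X 1 ^ p * X ((n : ℕ) : Fin (m + 1)) ^ (s + 1) * X ((kk : ℕ) : Fin (m + 1)) := by
    intro kk h1 h2
    rw [hpb kk h1 (by omega), ha kk (by omega) (by omega) (by omega), zero_add, pow_one, c1]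
  have elast : (∏ t ∈ Finset.range (m - 1),
        (X ((t : ℕ) : Fin (m + 1)) : MvPolynomial (Fin (m + 1)) k) ^ partCount r l (m - t)) *
      X (((m - 1 : ℕ)) : Fin (m + 1)) ^ partCount r l 1
      = X 1 ^ p * X ((n : ℕ) : Fin (m + 1)) ^ (s + 1) := by
    rw [hpb (m - 1) (by omega) le_rfl, pc0 1 (by omega) (by omega), pow_zero, mul_one, c1]
  -- abbreviations
  set Mp : Ideal (MvPolynomial (Fin (m + 1)) k) :=
    Ideal.span { f | ∃ i : ℕ, i < m ∧ f = X ((i : ℕ) : Fin (m + 1)) } with hMp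
  set J : Ideal (MvPolynomial (Fin (m + 1)) k) :=
    Ideal.span ({ f | ∃ i : ℕ, 1 ≤ i ∧ i < n ∧ f = X ((i : ℕ) : Fin (m + 1)) }
      ∪ { X ((n : ℕ) : Fin (m + 1)) ^ (s + 1) }) with hJ
  set L : Ideal (MvPolynomial (Fin (m + 1)) k) := lexIdeal k m r l with hL
  set M : Ideal (MvPolynomial (Fin (m + 1)) k) :=
    Ideal.span ({ X (0 : Fin (m + 1)) ^ 2 }
      ∪ { f | ∃ i : ℕ, 1 ≤ i ∧ i < m ∧ f = X ((i : ℕ) : Fin (m + 1)) }) with hM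
  set A : Ideal (MvPolynomial (Fin (m + 1)) k) := Ideal.span {X 0} * Mp with hA
  set B : Ideal (MvPolynomial (Fin (m + 1)) k) := Ideal.span {X 1 ^ p} * J with hB
  -- basic memberships
  have hX1M : (X (1 : Fin (m + 1)) : MvPolynomial (Fin (m + 1)) k) ∈ M :=
    Ideal.subset_span (Or.inr ⟨1, le_rfl, by omega, by rw [c1]⟩)
  have hX0L : (X (0 : Fin (m + 1)) : MvPolynomial (Fin (m + 1)) k) ∈ L :=
    Ideal.subset_span (Or.inl ⟨0, by omega, e0.symm⟩)
  have hB1 : (X (1 : Fin (m + 1)) : MvPolynomial (Fin (m + 1)) k) ^ (p + 1) ∈ B := by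
    rw [pow_succ]
    exact Ideal.mul_mem_mul (Ideal.subset_span rfl)
      (Ideal.subset_span (Or.inl ⟨1, le_rfl, by omega, by rw [c1]⟩))
  have hBi : ∀ i : ℕ, 1 ≤ i → i < n →
      (X (1 : Fin (m + 1)) : MvPolynomial (Fin (m + 1)) k) ^ p * X ((i : ℕ) : Fin (m + 1)) ∈ B :=
    fun i h1 h2 => Ideal.mul_mem_mul (Ideal.subset_span rfl)
      (Ideal.subset_span (Or.inl ⟨i, h1, h2, rfl⟩))
  have hBn : (X (1 : Fin (m + 1)) : MvPolynomial (Fin (m + 1)) k) ^ p *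
      X ((n : ℕ) : Fin (m + 1)) ^ (s + 1) ∈ B :=
    Ideal.mul_mem_mul (Ideal.subset_span rfl) (Ideal.subset_span (Or.inr rfl))
  have hBn2 : (X (1 : Fin (m + 1)) : MvPolynomial (Fin (m + 1)) k) ^ p *
      X ((n : ℕ) : Fin (m + 1)) ^ (s + 2) ∈ B := by
    refine Ideal.mul_mem_mul (Ideal.subset_span rfl) ?_
    rw [show (X ((n : ℕ) : Fin (m + 1)) : MvPolynomial (Fin (m + 1)) k) ^ (s + 2)
      = X ((n : ℕ) : Fin (m + 1)) * X ((n : ℕ) : Fin (m + 1)) ^ (s + 1) by ring]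
    exact Ideal.mul_mem_left _ _ (Ideal.subset_span (Or.inr rfl))
  have hBbig : ∀ kk : ℕ,
      (X (1 : Fin (m + 1)) : MvPolynomial (Fin (m + 1)) k) ^ p *
        X ((n : ℕ) : Fin (m + 1)) ^ (s + 1) * X ((kk : ℕ) : Fin (m + 1)) ∈ B := by
    intro kk
    rw [mul_assoc]
    exact Ideal.mul_mem_mul (Ideal.subset_span rfl)
      (Ideal.mul_mem_right _ _ (Ideal.subset_span (Or.inr rfl)))
  have hBleM : B ≤ M := by
    refine le_trans Ideal.mul_le_left (Ideal.span_le.mpr ?_)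
    rw [Set.singleton_subset_iff]
    exact Ideal.pow_mem_of_mem M hX1M p (by omega)
  have hBleL : B ≤ L := by
    rw [hB, Ideal.span_mul_span']
    refine Ideal.span_le.mpr ?_
    rintro x hx
    rw [Set.mem_mul] at hx
    obtain ⟨u, hu, v, hv, rfl⟩ := hx
    rw [Set.mem_singleton_iff] at hu
    subst hu
    rcases hv with ⟨i, hi1, hi2, rfl⟩ | hv
    · by_cases hone : i = 1
      · subst hone
        rw [c1, ← pow_succ]
        exact Ideal.subset_span (Or.inl ⟨1, by omega, e1.symm⟩)
      · exact Ideal.subset_span (Or.inl ⟨i, by omega, (ei i (by omega) hi2).symm⟩)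
    · rw [Set.mem_singleton_iff] at hv
      subst hv
      exact Ideal.subset_span (Or.inr elast.symm)
  have hAleM : A ≤ M := by
    rw [hA, Ideal.span_mul_span']
    refine Ideal.span_le.mpr ?_
    rintro x hx
    rw [Set.mem_mul] at hx
    obtain ⟨u, hu, v, hv, rfl⟩ := hx
    rw [Set.mem_singleton_iff] at hu
    subst hu
    obtain ⟨i, him, rfl⟩ := hv
    by_cases hi0 : i = 0
    · subst hi0
      rw [c0, ← pow_two]
      exact Ideal.subset_span (Or.inl rfl)
    · exact Ideal.mul_mem_left _ _ (Ideal.subset_span (Or.inr ⟨i, by omega, him, rfl⟩))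
  have hAleL : A ≤ L :=
    le_trans Ideal.mul_le_left (Ideal.span_le.mpr (Set.singleton_subset_iff.mpr hX0L))
  refine le_antisymm (sup_le (le_inf hAleL hAleM) (le_inf hBleL hBleM)) ?_
  -- reverse inclusion
  have hLle : L ≤ Ideal.span {(X (0 : Fin (m + 1)) : MvPolynomial (Fin (m + 1)) k)} ⊔ B := by
    rw [hL]
    refine Ideal.span_le.mpr ?_
    rintro g (⟨kk, hkk2, rfl⟩ | hg)
    · by_cases hk0 : kk = 0
      · subst hk0
        rw [e0]
        exact Ideal.mem_sup_left (Ideal.subset_span rfl)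
      · by_cases hk1 : kk = 1
        · subst hk1
          rw [e1]
          exact Ideal.mem_sup_right hB1
        · by_cases hkn : kk < n
          · rw [ei kk (by omega) hkn]
            exact Ideal.mem_sup_right (hBi kk (by omega) hkn)
          · by_cases hke : kk = n
            · subst hke
              rw [en]
              exact Ideal.mem_sup_right hBn2
            · rw [ebig kk (by omega) (by omega)]
              exact Ideal.mem_sup_right (hBbig kk)
    · rw [Set.mem_singleton_iff] at hg
      subst hg
      rw [elast]
      exact Ideal.mem_sup_right hBn
  intro f hf
  obtain ⟨hfL, hfM⟩ := hf
  have hfsup := hLle hfL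
  rw [Submodule.mem_sup] at hfsup
  obtain ⟨a, haa, b, hbb, rfl⟩ := hfsup
  obtain ⟨g, hg⟩ := Ideal.mem_span_singleton'.mp haa
  have hX0gM : X 0 * g ∈ M := by
    rw [show (X (0 : Fin (m + 1)) : MvPolynomial (Fin (m + 1)) k) * g = (a + b) - b by
      rw [← hg]; ring]
    exact M.sub_mem hfM (hBleM hbb)
  have hgMp : g ∈ Mp := cancel_aux k m (by omega) g hX0gM
  rw [Submodule.add_eq_sup]
  refine Submodule.add_mem _ (Ideal.mem_sup_left ?_) (Ideal.mem_sup_right hbb)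
  rw [← hg, mul_comm]
  exact Ideal.mul_mem_mul (Ideal.subset_span rfl) hgMp

end
end
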